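/- arXiv:2507.12779 — 2 statements merged into one kernel-verified Lean document; each statement's English description precedes it below -/
import Mathlib

section
/- The producer surplus P(k) := ϑ(k)·(1 − k/F(ϑ(k)))·(1 − F(ϑ(k))) is differentiable at almost every k ∈ (0,1), with derivative P'(k) = −(1/F(ϑ(k)))·∫_{ϑ(k)}^{v̄} φ(s)·f(s) ds, which is strictly negative. -/
/-! Integrating `(v (1 - F v))' = -φ f` gives `∫_v^{v̄} φ f = v (1 - F v)`, so the first-order
condition reads `k = K(v) := φ F² / (φ F + v (1 - F))`. Regularity makes `K' > 0` on `(vᴹ, v̄)`,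
hence `ϑ` is the differentiable inverse of `K`. Writing `P(k) = A(ϑ k) - k B(ϑ k)` with
`A = v (1 - F)` and `B = A / F`, the first-order condition is exactly `A' = k B'` at `ϑ k`, so by
the envelope theorem `P'(k) = -B(ϑ k) = -(1/F) ∫_{ϑ k}^{v̄} φ f < 0`. -/

open Set MeasureTheory

/-- The virtual value function `φ(v) = v - (1 - F v) / f v`. -/
noncomputable def phi (F f : ℝ → ℝ) (v : ℝ) : ℝ := v - (1 - F v) / f v

/-- The function `G(v) = φ(v)·F(v) + ∫_v^{v̄} φ(s)·f(s) ds`. -/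
noncomputable def Gfun (F f : ℝ → ℝ) (vhi : ℝ) (v : ℝ) : ℝ :=
  phi F f v * F v + ∫ s in v..vhi, phi F f s * f s

open Filter Topology

theorem HasDerivAt.envelope {A B θ : ℝ → ℝ} {a b θ' k : ℝ} (hA : HasDerivAt A a (θ k))
    (hB : HasDerivAt B b (θ k)) (hθ : HasDerivAt θ θ' k) (hfoc : a = k * b) :
    HasDerivAt (fun k => A (θ k) - k * B (θ k)) (-B (θ k)) k := by
  refine ((hA.comp k hθ).sub ((hasDerivAt_id k).mul (hB.comp k hθ))).congr_deriv ?_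
  simp only [Function.comp, id, hfoc]
  ring

theorem HasDerivAt.of_invOn_of_strictMonoOn {K θ : ℝ → ℝ} {I J : Set ℝ} {k K' : ℝ}
    (hI : IsOpen I) (hJ : IsOpen J) (hk : k ∈ I) (hK : StrictMonoOn K J)
    (hKJ : MapsTo K J I) (hθI : MapsTo θ I J) (hinv : InvOn θ K J I)
    (hKd : HasDerivAt K K' (θ k)) (hK' : K' ≠ 0) : HasDerivAt θ K'⁻¹ k := by
  have hmono : MonotoneOn θ I := fun a ha b hb hab => by
    by_contra! h
    have := hK (hθI hb) (hθI ha) h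
    rw [hinv.2 ha, hinv.2 hb] at this
    linarith
  have himage : θ '' I ∈ 𝓝 (θ k) :=
    mem_of_superset (hJ.mem_nhds (hθI hk)) fun v hv => ⟨K v, hKJ hv, hinv.1 hv⟩
  refine HasDerivAt.of_local_left_inverse ?_ hKd hK' ?_
  · exact continuousAt_of_monotoneOn_of_image_mem_nhds hmono (hI.mem_nhds hk) himage
  · filter_upwards [hI.mem_nhds hk] with y hy using hinv.2 hy

section VirtualValue

variable {F f : ℝ → ℝ} {v vlo vhi : ℝ}

theorem hasDerivAt_mul_one_sub (hF : HasDerivAt F (f v) v) (hf : f v ≠ 0) :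
    HasDerivAt (fun w => w * (1 - F w)) (-(phi F f v * f v)) v := by
  refine ((hasDerivAt_id v).mul ((hasDerivAt_const v 1).sub hF)).congr_deriv ?_
  simp only [phi, Pi.sub_apply, id]
  field_simp
  ring

theorem continuousOn_phi {s : Set ℝ} (hF : ContinuousOn F s) (hf : ContinuousOn f s)
    (hf0 : ∀ v ∈ s, f v ≠ 0) : ContinuousOn (phi F f) s :=
  continuousOn_id.sub ((continuousOn_const.sub hF).div hf hf0)

theorem differentiableAt_phi (hF : HasDerivAt F (f v) v) (hf : DifferentiableAt ℝ f v)
    (hf0 : f v ≠ 0) : DifferentiableAt ℝ (phi F f) v :=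
  differentiableAt_id.sub (((differentiableAt_const 1).sub hF.differentiableAt).div hf hf0)

theorem integral_phi_mul {a b : ℝ} (hab : a ≤ b) (hF : ∀ v ∈ Icc a b, HasDerivAt F (f v) v)
    (hf : ContinuousOn f (Icc a b)) (hf0 : ∀ v ∈ Icc a b, f v ≠ 0) :
    ∫ s in a..b, phi F f s * f s = a * (1 - F a) - b * (1 - F b) := by
  have hFc : ContinuousOn F (Icc a b) := HasDerivAt.continuousOn hF
  rw [← uIcc_of_le hab] at hF hf hf0 hFc
  have := intervalIntegral.integral_eq_sub_of_hasDerivAt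
    (fun v hv => hasDerivAt_mul_one_sub (hF v hv) (hf0 v hv))
    ((continuousOn_phi hFc hf hf0).mul hf).neg.intervalIntegrable
  rw [intervalIntegral.integral_neg] at this
  linarith

theorem integral_phi_mul_eq (hF : ∀ v ∈ Icc vlo vhi, HasDerivAt F (f v) v)
    (hf : ContinuousOn f (Icc vlo vhi)) (hf0 : ∀ v ∈ Icc vlo vhi, f v ≠ 0) (hFhi : F vhi = 1)
    (hv : v ∈ Icc vlo vhi) : ∫ s in v..vhi, phi F f s * f s = v * (1 - F v) := by
  have hsub : Icc v vhi ⊆ Icc vlo vhi := Icc_subset_Icc_left hv.1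
  rw [integral_phi_mul hv.2 (fun w hw => hF w (hsub hw)) (hf.mono hsub)
    (fun w hw => hf0 w (hsub hw)), hFhi, sub_self, mul_zero, sub_zero]

theorem Gfun_eq (hF : ∀ v ∈ Icc vlo vhi, HasDerivAt F (f v) v)
    (hf : ContinuousOn f (Icc vlo vhi))
    (hf0 : ∀ v ∈ Icc vlo vhi, f v ≠ 0) (hFhi : F vhi = 1) (hv : v ∈ Icc vlo vhi) :
    Gfun F f vhi v = phi F f v * F v + v * (1 - F v) := by
  rw [Gfun, integral_phi_mul_eq hF hf hf0 hFhi hv]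

theorem hasDerivAt_Gfun (hF : ∀ v ∈ Icc vlo vhi, HasDerivAt F (f v) v)
    (hf : DifferentiableOn ℝ f (Icc vlo vhi)) (hf0 : ∀ v ∈ Icc vlo vhi, f v ≠ 0)
    (hFhi : F vhi = 1) (hv : v ∈ Ioo vlo vhi) :
    HasDerivAt (Gfun F f vhi) (deriv (phi F f) v * F v) v := by
  have hvI := Ioo_subset_Icc_self hv
  have hmem : Icc vlo vhi ∈ 𝓝 v := Icc_mem_nhds hv.1 hv.2
  have hφ := (differentiableAt_phi (hF v hvI) (hf.differentiableAt hmem) (hf0 v hvI)).hasDerivAt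
  -- `(φ F)' = φ' F + φ f` and `(v (1 - F))' = -φ f`
  have hG := (hφ.mul (hF v hvI)).add (hasDerivAt_mul_one_sub (hF v hvI) (hf0 v hvI))
  refine (hG.congr_deriv (by ring)).congr_of_eventuallyEq ?_
  filter_upwards [hmem] with w hw using Gfun_eq hF hf.continuousOn hf0 hFhi hw

theorem strictMonoOn_Icc_of_hasDerivAt_pos (hF : ∀ v ∈ Icc vlo vhi, HasDerivAt F (f v) v)
    (hfpos : ∀ v ∈ Icc vlo vhi, 0 < f v) : StrictMonoOn F (Icc vlo vhi) :=
  strictMonoOn_of_hasDerivWithinAt_pos (convex_Icc _ _) (HasDerivAt.continuousOn hF)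
    (fun v hv => (hF v (interior_subset hv)).hasDerivWithinAt)
    fun v hv => hfpos v (interior_subset hv)

theorem F_mem_Ioo (hF : ∀ v ∈ Icc vlo vhi, HasDerivAt F (f v) v)
    (hfpos : ∀ v ∈ Icc vlo vhi, 0 < f v) (hFlo : F vlo = 0) (hFhi : F vhi = 1)
    (hv : v ∈ Ioo vlo vhi) : F v ∈ Ioo 0 1 := by
  have hmono := strictMonoOn_Icc_of_hasDerivAt_pos hF hfpos
  have hlt := hv.1.trans hv.2
  rw [← hFlo, ← hFhi]
  exact ⟨hmono (left_mem_Icc.2 hlt.le) (Ioo_subset_Icc_self hv) hv.1,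
    hmono (Ioo_subset_Icc_self hv) (right_mem_Icc.2 hlt.le) hv.2⟩

theorem pos_of_phi_pos (hφ : 0 < phi F f v) (hF : F v < 1) (hf : 0 < f v) : 0 < v := by
  have := div_pos (sub_pos.2 hF) hf
  unfold phi at hφ
  linarith

theorem phi_pos_and_F_mem_Ioo_and_pos {vM : ℝ} (hF : ∀ v ∈ Icc vlo vhi, HasDerivAt F (f v) v)
    (hfpos : ∀ v ∈ Icc vlo vhi, 0 < f v) (hFlo : F vlo = 0) (hFhi : F vhi = 1)
    (hreg : StrictMonoOn (phi F f) (Icc vlo vhi))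
    (hvM : IsLeast {v ∈ Icc vlo vhi | 0 ≤ phi F f v} vM) (hv : v ∈ Ioo vM vhi) :
    0 < phi F f v ∧ F v ∈ Ioo 0 1 ∧ 0 < v := by
  have hvI : v ∈ Icc vlo vhi := ⟨hvM.1.1.1.trans hv.1.le, hv.2.le⟩
  have hφ := hvM.1.2.trans_lt (hreg hvM.1.1 hvI hv.1)
  have hFv := F_mem_Ioo hF hfpos hFlo hFhi ⟨hvM.1.1.1.trans_lt hv.1, hv.2⟩
  exact ⟨hφ, hFv, pos_of_phi_pos hφ hFv.2 (hfpos v hvI)⟩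

end VirtualValue

/-- The inverse of `ϑ`: the capacity at which `v` solves the first-order condition. -/
noncomputable def focCapacity (F f : ℝ → ℝ) (vhi v : ℝ) : ℝ :=
  phi F f v * F v ^ 2 / Gfun F f vhi v

section FocCapacity

variable {F f : ℝ → ℝ} {v vlo vhi : ℝ}

theorem hasDerivAt_focCapacity (hF : ∀ v ∈ Icc vlo vhi, HasDerivAt F (f v) v)
    (hf : DifferentiableOn ℝ f (Icc vlo vhi)) (hf0 : ∀ v ∈ Icc vlo vhi, f v ≠ 0)
    (hFhi : F vhi = 1) (hv : v ∈ Ioo vlo vhi) (hG : Gfun F f vhi v ≠ 0) :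
    HasDerivAt (focCapacity F f vhi)
      ((deriv (phi F f) v * F v ^ 2 * (v * (1 - F v))
        + 2 * phi F f v * F v * f v * Gfun F f vhi v) / Gfun F f vhi v ^ 2) v := by
  have hvI := Ioo_subset_Icc_self hv
  have hφ := (differentiableAt_phi (hF v hvI) (hf.differentiableAt (Icc_mem_nhds hv.1 hv.2))
    (hf0 v hvI)).hasDerivAt
  refine ((hφ.mul ((hF v hvI).pow 2)).div (hasDerivAt_Gfun hF hf hf0 hFhi hv) hG).congr_deriv ?_
  rw [Gfun_eq hF hf.continuousOn hf0 hFhi hvI]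
  norm_num
  ring

theorem Gfun_pos (hG : Gfun F f vhi v = phi F f v * F v + v * (1 - F v))
    (hφ : 0 < phi F f v) (hFv : F v ∈ Ioo 0 1) (hv : 0 < v) : 0 < Gfun F f vhi v :=
  hG ▸ add_pos (mul_pos hφ hFv.1) (mul_pos hv (sub_pos.2 hFv.2))

theorem focCapacity_mem_Ioo (hG : Gfun F f vhi v = phi F f v * F v + v * (1 - F v))
    (hφ : 0 < phi F f v) (hFv : F v ∈ Ioo 0 1) (hv : 0 < v) :
    focCapacity F f vhi v ∈ Ioo 0 1 := by
  have hF1 := sub_pos.2 hFv.2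
  have hGpos := Gfun_pos hG hφ hFv hv
  refine ⟨div_pos (by have := hFv.1; positivity) hGpos, (div_lt_one hGpos).2 ?_⟩
  rw [hG]
  nlinarith [mul_pos (mul_pos hφ hFv.1) hF1, mul_pos hv hF1]

variable {vM : ℝ}

theorem exists_hasDerivAt_focCapacity_pos (hF : ∀ v ∈ Icc vlo vhi, HasDerivAt F (f v) v)
    (hfpos : ∀ v ∈ Icc vlo vhi, 0 < f v) (hf : DifferentiableOn ℝ f (Icc vlo vhi))
    (hFlo : F vlo = 0) (hFhi : F vhi = 1) (hreg : StrictMonoOn (phi F f) (Icc vlo vhi))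
    (hvM : IsLeast {v ∈ Icc vlo vhi | 0 ≤ phi F f v} vM) (hv : v ∈ Ioo vM vhi) :
    ∃ d, 0 < d ∧ HasDerivAt (focCapacity F f vhi) d v := by
  have hvlo : v ∈ Ioo vlo vhi := ⟨hvM.1.1.1.trans_lt hv.1, hv.2⟩
  have hvI := Ioo_subset_Icc_self hvlo
  have hf0 : ∀ v ∈ Icc vlo vhi, f v ≠ 0 := fun v hv => (hfpos v hv).ne'
  obtain ⟨hφ, hFv, hv0⟩ := phi_pos_and_F_mem_Ioo_and_pos hF hfpos hFlo hFhi hreg hvM hv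
  have hGpos := Gfun_pos (Gfun_eq hF hf.continuousOn hf0 hFhi hvI) hφ hFv hv0
  have hφ' : 0 ≤ deriv (phi F f) v :=
    hreg.monotoneOn.derivWithin_nonneg.trans_eq
      (derivWithin_of_mem_nhds (Icc_mem_nhds hvlo.1 hvlo.2))
  refine ⟨_, ?_, hasDerivAt_focCapacity hF hf hf0 hFhi hvlo hGpos.ne'⟩
  have := hfpos v hvI
  have := hFv.1
  have := mul_pos hv0 (sub_pos.2 hFv.2)
  positivity

theorem differentiableAt_of_foc {θ : ℝ → ℝ} {k : ℝ}
    (hF : ∀ v ∈ Icc vlo vhi, HasDerivAt F (f v) v) (hfpos : ∀ v ∈ Icc vlo vhi, 0 < f v)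
    (hf : DifferentiableOn ℝ f (Icc vlo vhi))
    (hFlo : F vlo = 0) (hFhi : F vhi = 1) (hreg : StrictMonoOn (phi F f) (Icc vlo vhi))
    (hvM : IsLeast {v ∈ Icc vlo vhi | 0 ≤ phi F f v} vM)
    (hθ : ∀ k ∈ Ioo (0:ℝ) 1, k * Gfun F f vhi (θ k) = phi F f (θ k) * F (θ k) ^ 2)
    (hθuniq : ∀ k ∈ Ioo (0:ℝ) 1, ∀ v ∈ Icc vlo vhi,
      k * Gfun F f vhi v = phi F f v * F v ^ 2 → v = θ k)
    (hθJ : MapsTo θ (Ioo 0 1) (Ioo vM vhi)) (hk : k ∈ Ioo (0:ℝ) 1) :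
    DifferentiableAt ℝ θ k := by
  have hJ : ∀ v ∈ Ioo vM vhi, v ∈ Icc vlo vhi :=
    fun v hv => ⟨hvM.1.1.1.trans hv.1.le, hv.2.le⟩
  have hf0 : ∀ v ∈ Icc vlo vhi, f v ≠ 0 := fun v hv => (hfpos v hv).ne'
  have hKd := fun v (hv : v ∈ Ioo vM vhi) =>
    exists_hasDerivAt_focCapacity_pos hF hfpos hf hFlo hFhi hreg hvM hv
  have hKmono : StrictMonoOn (focCapacity F f vhi) (Ioo vM vhi) := by
    refine strictMonoOn_of_deriv_pos (convex_Ioo _ _) (fun v hv => ?_) fun v hv => ?_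
    · obtain ⟨_, -, hd⟩ := hKd v hv
      exact hd.continuousAt.continuousWithinAt
    · obtain ⟨_, hpos, hd⟩ := hKd v (interior_subset hv)
      exact hd.deriv ▸ hpos
  have hGK : ∀ v ∈ Ioo vM vhi, 0 < Gfun F f vhi v ∧ focCapacity F f vhi v ∈ Ioo 0 1 :=
    fun v hv => by
      obtain ⟨hφ, hFv, hv0⟩ := phi_pos_and_F_mem_Ioo_and_pos hF hfpos hFlo hFhi hreg hvM hv
      have hG := Gfun_eq hF hf.continuousOn hf0 hFhi (hJ v hv)
      exact ⟨Gfun_pos hG hφ hFv hv0, focCapacity_mem_Ioo hG hφ hFv hv0⟩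
  have hKJ : MapsTo (focCapacity F f vhi) (Ioo vM vhi) (Ioo 0 1) := fun v hv => (hGK v hv).2
  have hinv : InvOn θ (focCapacity F f vhi) (Ioo vM vhi) (Ioo 0 1) := by
    refine ⟨fun v hv => (hθuniq _ (hKJ hv) v (hJ v hv) ?_).symm, fun k hk => ?_⟩
    · exact div_mul_cancel₀ _ (hGK v hv).1.ne'
    · rw [focCapacity, div_eq_iff (hGK _ (hθJ hk)).1.ne', hθ k hk]
  obtain ⟨_, hpos, hd⟩ := hKd _ (hθJ hk)
  exact (HasDerivAt.of_invOn_of_strictMonoOn isOpen_Ioo isOpen_Ioo hk hKmono hKJ hθJ hinv hd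
    hpos.ne').differentiableAt

end FocCapacity

theorem stmt_8_general
    (vlo vhi : ℝ)
    (F f : ℝ → ℝ)
    (hFlo : F vlo = 0) (hFhi : F vhi = 1)
    (hFderiv : ∀ v ∈ Set.Icc vlo vhi, HasDerivAt F (f v) v)
    (hfpos : ∀ v ∈ Set.Icc vlo vhi, 0 < f v)
    (hfdiff : DifferentiableOn ℝ f (Set.Icc vlo vhi))
    (hreg : StrictMonoOn (phi F f) (Set.Icc vlo vhi))
    (vM : ℝ) (hvM : IsLeast {v ∈ Set.Icc vlo vhi | 0 ≤ phi F f v} vM)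
    (FInv : ℝ → ℝ)
    (θ : ℝ → ℝ)
    (hθ : ∀ k ∈ Set.Ioo (0:ℝ) 1, θ k ∈ Set.Icc vlo vhi ∧
      k * Gfun F f vhi (θ k) = phi F f (θ k) * (F (θ k)) ^ 2)
    (hθuniq : ∀ k ∈ Set.Ioo (0:ℝ) 1, ∀ v ∈ Set.Icc vlo vhi,
      k * Gfun F f vhi v = phi F f v * (F v) ^ 2 → v = θ k)
    (hθloc : ∀ k ∈ Set.Ioo (0:ℝ) 1, θ k ∈ Set.Ioo (max vM (FInv k)) vhi)
    :
    ∀ᵐ k ∂(MeasureTheory.volume.restrict (Set.Ioo (0:ℝ) 1)),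
      HasDerivAt (fun k' => θ k' * (1 - k' / F (θ k')) * (1 - F (θ k')))
          (-(1 / F (θ k)) * ∫ s in θ k..vhi, phi F f s * f s) k ∧
        -(1 / F (θ k)) * ∫ s in θ k..vhi, phi F f s * f s < 0 := by
  rw [ae_restrict_iff' measurableSet_Ioo]
  refine ae_of_all _ fun k hk => ?_
  have hf0 : ∀ v ∈ Icc vlo vhi, f v ≠ 0 := fun v hv => (hfpos v hv).ne'
  have hθJ : MapsTo θ (Ioo 0 1) (Ioo vM vhi) :=
    fun k hk => ⟨(le_max_left _ _).trans_lt (hθloc k hk).1, (hθloc k hk).2⟩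
  have hvI : θ k ∈ Icc vlo vhi := (hθ k hk).1
  obtain ⟨-, ⟨hF0, hF1⟩, hv0⟩ :=
    phi_pos_and_F_mem_Ioo_and_pos hFderiv hfpos hFlo hFhi hreg hvM (hθJ hk)
  have hθd := differentiableAt_of_foc hFderiv hfpos hfdiff hFlo hFhi hreg hvM
    (fun k hk => (hθ k hk).2) hθuniq hθJ hk
  have hA := hasDerivAt_mul_one_sub (hFderiv _ hvI) (hf0 _ hvI)
  have hB := hA.fun_div (hFderiv _ hvI) hF0.ne'
  have hfoc := (hθ k hk).2
  rw [Gfun_eq hFderiv hfdiff.continuousOn hf0 hFhi hvI] at hfoc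
  have hP := hA.envelope hB hθd.hasDerivAt (by field_simp; linear_combination f (θ k) * hfoc)
  rw [integral_phi_mul_eq hFderiv hfdiff.continuousOn hf0 hFhi hvI]
  refine ⟨?_, mul_neg_of_neg_of_pos (neg_neg_of_pos (one_div_pos.2 hF0))
    (mul_pos hv0 (sub_pos.2 hF1))⟩
  convert hP using 1
  · funext k'
    ring
  · ring

/-- the producer surplus `P(k) = ϑ(k)·(1 − k/F(ϑ(k)))·(1 − F(ϑ(k)))` is
differentiable at almost every `k ∈ (0,1)`, with derivative
`P'(k) = −(1/F(ϑ(k)))·∫_{ϑ(k)}^{v̄} φ(s)·f(s) ds`, which is strictly negative. -/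
theorem stmt_8
    (vlo vhi : ℝ) (hvlo : 0 ≤ vlo) (hlt : vlo < vhi)
    (F f : ℝ → ℝ) (hFmono : Monotone F)
    (hFlo : F vlo = 0) (hFhi : F vhi = 1)
    (hFderiv : ∀ v ∈ Set.Icc vlo vhi, HasDerivAt F (f v) v)
    (hfpos : ∀ v ∈ Set.Icc vlo vhi, 0 < f v)
    (hfdiff : DifferentiableOn ℝ f (Set.Icc vlo vhi))
    (hreg : StrictMonoOn (phi F f) (Set.Icc vlo vhi))
    (vM : ℝ) (hvM : IsLeast {v ∈ Set.Icc vlo vhi | 0 ≤ phi F f v} vM)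
    (FInv : ℝ → ℝ)
    (hFInv : ∀ k ∈ Set.Ioo (0:ℝ) 1, FInv k ∈ Set.Icc vlo vhi ∧ F (FInv k) = k)
    (θ : ℝ → ℝ)
    (hθ : ∀ k ∈ Set.Ioo (0:ℝ) 1, θ k ∈ Set.Icc vlo vhi ∧
      k * Gfun F f vhi (θ k) = phi F f (θ k) * (F (θ k)) ^ 2)
    (hθuniq : ∀ k ∈ Set.Ioo (0:ℝ) 1, ∀ v ∈ Set.Icc vlo vhi,
      k * Gfun F f vhi v = phi F f v * (F v) ^ 2 → v = θ k)
    (hθloc : ∀ k ∈ Set.Ioo (0:ℝ) 1, θ k ∈ Set.Ioo (max vM (FInv k)) vhi)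
    :
    ∀ᵐ k ∂(MeasureTheory.volume.restrict (Set.Ioo (0:ℝ) 1)),
      HasDerivAt (fun k' => θ k' * (1 - k' / F (θ k')) * (1 - F (θ k')))
          (-(1 / F (θ k)) * ∫ s in θ k..vhi, phi F f s * f s) k ∧
        -(1 / F (θ k)) * ∫ s in θ k..vhi, phi F f s * f s < 0 :=
  stmt_8_general vlo vhi F f hFlo hFhi hFderiv hfpos hfdiff hreg vM hvM FInv θ hθ hθuniq hθloc
end

section
/- The rationing probability π(k) := k/F(ϑ(k)) is strictly increasing in k on (0,1). -/
/-!
Write `H v = φ(v) F(v) / G(v)`. The first-order condition says `k = H(ϑ(k)) F(ϑ(k))` and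
`π(k) = H(ϑ(k))`. Where `φ` and `F` are positive, `H` is strictly increasing: by
`G(w) = G(u) + φ(w)F(w) - φ(u)F(u) - ∫_u^w φ f` and `∫_u^w φ f ≥ φ(u) (F(w) - F(u))`,
`φ(w)F(w) G(u) - φ(u)F(u) G(w) ≥ (φ(w)F(w) - φ(u)F(u)) ∫_u^{v̄} φ f + φ(u)² F(u) (F(w) - F(u)) > 0`.
Hence `H F` is strictly increasing as well, so `ϑ` is strictly increasing, and so is `π = H ∘ ϑ`.
-/

open Set MeasureTheory

section VirtualValue

variable {vlo vhi : ℝ} {F f : ℝ → ℝ}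

theorem strictMonoOn_of_hasDerivAt_pos_Icc
    (hFderiv : ∀ v ∈ Icc vlo vhi, HasDerivAt F (f v) v) (hfpos : ∀ v ∈ Icc vlo vhi, 0 < f v) :
    StrictMonoOn F (Icc vlo vhi) := by
  refine strictMonoOn_of_deriv_pos (convex_Icc _ _)
    (fun v hv => (hFderiv v hv).continuousAt.continuousWithinAt) fun v hv => ?_
  rw [interior_Icc] at hv
  rw [(hFderiv v (Ioo_subset_Icc_self hv)).deriv]
  exact hfpos v (Ioo_subset_Icc_self hv)

theorem intervalIntegrable_phi_mul
    (hFderiv : ∀ v ∈ Icc vlo vhi, HasDerivAt F (f v) v) (hfpos : ∀ v ∈ Icc vlo vhi, 0 < f v)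
    (hf : ContinuousOn f (Icc vlo vhi)) {u w : ℝ} (hu : u ∈ Icc vlo vhi) (hw : w ∈ Icc vlo vhi) :
    IntervalIntegrable (fun s => phi F f s * f s) volume u w := by
  have hF : ContinuousOn F (Icc vlo vhi) := fun v hv =>
    (hFderiv v hv).continuousAt.continuousWithinAt
  have hphi : ContinuousOn (phi F f) (Icc vlo vhi) :=
    continuousOn_id.sub ((continuousOn_const.sub hF).div hf fun v hv => (hfpos v hv).ne')
  exact ((hphi.mul hf).mono (uIcc_subset_Icc hu hw)).intervalIntegrable

theorem Gfun_eq_add_sub_integral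
    (hFderiv : ∀ v ∈ Icc vlo vhi, HasDerivAt F (f v) v) (hfpos : ∀ v ∈ Icc vlo vhi, 0 < f v)
    (hf : ContinuousOn f (Icc vlo vhi)) {u w : ℝ} (hu : u ∈ Icc vlo vhi) (hw : w ∈ Icc vlo vhi) :
    Gfun F f vhi w = Gfun F f vhi u + phi F f w * F w - phi F f u * F u
      - ∫ s in u..w, phi F f s * f s := by
  have hvhi : vhi ∈ Icc vlo vhi := right_mem_Icc.mpr (hu.1.trans hu.2)
  have hadd := intervalIntegral.integral_add_adjacent_intervals
    (intervalIntegrable_phi_mul hFderiv hfpos hf hu hw)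
    (intervalIntegrable_phi_mul hFderiv hfpos hf hw hvhi)
  unfold Gfun
  linarith

theorem phi_mul_sub_le_integral
    (hFderiv : ∀ v ∈ Icc vlo vhi, HasDerivAt F (f v) v) (hfpos : ∀ v ∈ Icc vlo vhi, 0 < f v)
    (hf : ContinuousOn f (Icc vlo vhi)) (hreg : MonotoneOn (phi F f) (Icc vlo vhi))
    {u w : ℝ} (hu : u ∈ Icc vlo vhi) (hw : w ∈ Icc vlo vhi) (huw : u ≤ w) :
    phi F f u * (F w - F u) ≤ ∫ s in u..w, phi F f s * f s := by
  have hfint : IntervalIntegrable f volume u w :=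
    (hf.mono (uIcc_subset_Icc hu hw)).intervalIntegrable
  calc phi F f u * (F w - F u) = ∫ s in u..w, phi F f u * f s := by
        rw [intervalIntegral.integral_const_mul, intervalIntegral.integral_eq_sub_of_hasDerivAt
          (fun v hv => hFderiv v (uIcc_subset_Icc hu hw hv)) hfint]
    _ ≤ ∫ s in u..w, phi F f s * f s := by
        refine intervalIntegral.integral_mono_on huw (hfint.const_mul _)
          (intervalIntegrable_phi_mul hFderiv hfpos hf hu hw) fun s hs => ?_
        have hs' : s ∈ Icc vlo vhi := ⟨hu.1.trans hs.1, hs.2.trans hw.2⟩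
        exact mul_le_mul_of_nonneg_right (hreg hu hs' hs.1) (hfpos s hs').le

theorem integral_phi_mul_nonneg (hfpos : ∀ v ∈ Icc vlo vhi, 0 < f v)
    (hreg : MonotoneOn (phi F f) (Icc vlo vhi)) {u : ℝ} (hu : u ∈ Icc vlo vhi)
    (hphi : 0 ≤ phi F f u) :
    0 ≤ ∫ s in u..vhi, phi F f s * f s := by
  refine intervalIntegral.integral_nonneg hu.2 fun s hs => ?_
  have hs' : s ∈ Icc vlo vhi := ⟨hu.1.trans hs.1, hs.2⟩
  exact mul_nonneg (hphi.trans (hreg hu hs' hs.1)) (hfpos s hs').le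

theorem Gfun_pos_s12 (hfpos : ∀ v ∈ Icc vlo vhi, 0 < f v)
    (hreg : MonotoneOn (phi F f) (Icc vlo vhi)) {u : ℝ} (hu : u ∈ Icc vlo vhi)
    (hphi : 0 < phi F f u) (hF : 0 < F u) :
    0 < Gfun F f vhi u :=
  add_pos_of_pos_of_nonneg (mul_pos hphi hF) (integral_phi_mul_nonneg hfpos hreg hu hphi.le)

theorem strictMonoOn_phi_mul_div_Gfun
    (hFderiv : ∀ v ∈ Icc vlo vhi, HasDerivAt F (f v) v) (hfpos : ∀ v ∈ Icc vlo vhi, 0 < f v)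
    (hf : ContinuousOn f (Icc vlo vhi)) (hreg : StrictMonoOn (phi F f) (Icc vlo vhi)) :
    StrictMonoOn (fun v => phi F f v * F v / Gfun F f vhi v)
      {v ∈ Icc vlo vhi | 0 < phi F f v ∧ 0 < F v} := by
  rintro u ⟨hu, hφu, hFu⟩ w ⟨hw, -, -⟩ huw
  have hφ : phi F f u < phi F f w := hreg hu hw huw
  have hF : F u < F w := strictMonoOn_of_hasDerivAt_pos_Icc hFderiv hfpos hu hw huw
  have hGu := Gfun_pos_s12 hfpos hreg.monotoneOn hu hφu hFu
  have hGw := Gfun_pos_s12 hfpos hreg.monotoneOn hw (hφu.trans hφ) (hFu.trans hF)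
  have hJ := integral_phi_mul_nonneg hfpos hreg.monotoneOn hu hφu.le
  have hI := phi_mul_sub_le_integral hFderiv hfpos hf hreg.monotoneOn hu hw huw.le
  have hG := Gfun_eq_add_sub_integral hFderiv hfpos hf hu hw
  have hGu_def : Gfun F f vhi u = phi F f u * F u + ∫ s in u..vhi, phi F f s * f s := rfl
  have hφF : phi F f u * F u < phi F f w * F w := mul_lt_mul hφ hF.le hFu (hφu.trans hφ).le
  have hcross : phi F f w * F w * Gfun F f vhi u - phi F f u * F u * Gfun F f vhi w
      = (phi F f w * F w - phi F f u * F u) * (∫ s in u..vhi, phi F f s * f s)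
        + phi F f u * F u * ∫ s in u..w, phi F f s * f s := by
    rw [hG, hGu_def]; ring
  dsimp only
  rw [div_lt_div_iff₀ hGu hGw]
  linarith [hcross, mul_nonneg (sub_pos.mpr hφF).le hJ,
    mul_le_mul_of_nonneg_left hI (mul_pos hφu hFu).le, mul_pos (mul_pos hφu hFu) (mul_pos hφu (sub_pos.mpr hF))]

theorem strictMonoOn_phi_mul_sq_div_Gfun
    (hFderiv : ∀ v ∈ Icc vlo vhi, HasDerivAt F (f v) v) (hfpos : ∀ v ∈ Icc vlo vhi, 0 < f v)
    (hf : ContinuousOn f (Icc vlo vhi)) (hreg : StrictMonoOn (phi F f) (Icc vlo vhi)) :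
    StrictMonoOn (fun v => phi F f v * F v ^ 2 / Gfun F f vhi v)
      {v ∈ Icc vlo vhi | 0 < phi F f v ∧ 0 < F v} := by
  rintro u hu w hw huw
  have hGw := Gfun_pos_s12 hfpos hreg.monotoneOn hw.1 hw.2.1 hw.2.2
  calc phi F f u * F u ^ 2 / Gfun F f vhi u = phi F f u * F u / Gfun F f vhi u * F u := by ring
    _ < phi F f w * F w / Gfun F f vhi w * F w :=
        mul_lt_mul (strictMonoOn_phi_mul_div_Gfun hFderiv hfpos hf hreg hu hw huw)
          (strictMonoOn_of_hasDerivAt_pos_Icc hFderiv hfpos hu.1 hw.1 huw).le hu.2.2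
          (div_pos (mul_pos hw.2.1 hw.2.2) hGw).le
    _ = phi F f w * F w ^ 2 / Gfun F f vhi w := by ring

end VirtualValue

theorem stmt_12_general
    (vlo vhi : ℝ)
    (F f : ℝ → ℝ)
    (hFlo : F vlo = 0)
    (hFderiv : ∀ v ∈ Set.Icc vlo vhi, HasDerivAt F (f v) v)
    (hfpos : ∀ v ∈ Set.Icc vlo vhi, 0 < f v)
    (hfdiff : DifferentiableOn ℝ f (Set.Icc vlo vhi))
    (hreg : StrictMonoOn (phi F f) (Set.Icc vlo vhi))
    (vM : ℝ) (hvM : IsLeast {v ∈ Set.Icc vlo vhi | 0 ≤ phi F f v} vM)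
    (FInv : ℝ → ℝ)
    (θ : ℝ → ℝ)
    (hθ : ∀ k ∈ Set.Ioo (0:ℝ) 1, θ k ∈ Set.Icc vlo vhi ∧
      k * Gfun F f vhi (θ k) = phi F f (θ k) * (F (θ k)) ^ 2)
    (hθloc : ∀ k ∈ Set.Ioo (0:ℝ) 1, θ k ∈ Set.Ioo (max vM (FInv k)) vhi)
    :
    StrictMonoOn (fun k => k / F (θ k)) (Set.Ioo (0:ℝ) 1) := by
  have hf := hfdiff.continuousOn
  have hθD : MapsTo θ (Ioo 0 1) {v ∈ Icc vlo vhi | 0 < phi F f v ∧ 0 < F v} := fun k hk => by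
    have hvMθ : vM < θ k := (le_max_left _ _).trans_lt (hθloc k hk).1
    refine ⟨(hθ k hk).1, hvM.1.2.trans_lt (hreg hvM.1.1 (hθ k hk).1 hvMθ), ?_⟩
    rw [← hFlo]
    exact strictMonoOn_of_hasDerivAt_pos_Icc hFderiv hfpos
      (left_mem_Icc.mpr (hvM.1.1.1.trans hvM.1.1.2)) (hθ k hk).1
      (hvM.1.1.1.trans_lt hvMθ)
  have hk_eq : ∀ k ∈ Ioo (0:ℝ) 1,
      phi F f (θ k) * F (θ k) ^ 2 / Gfun F f vhi (θ k) = k := fun k hk => by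
    have hG := Gfun_pos_s12 hfpos hreg.monotoneOn (hθD hk).1 (hθD hk).2.1 (hθD hk).2.2
    rw [div_eq_iff hG.ne', (hθ k hk).2]
  have hθmono : StrictMonoOn θ (Ioo 0 1) := fun a ha b hb hab =>
    (strictMonoOn_phi_mul_sq_div_Gfun hFderiv hfpos hf hreg).monotoneOn.reflect_lt
      (hθD ha) (hθD hb) (by simp only [hk_eq a ha, hk_eq b hb, hab])
  refine ((strictMonoOn_phi_mul_div_Gfun hFderiv hfpos hf hreg).comp hθmono hθD).congr
    fun k hk => ?_
  have hFθ := (hθD hk).2.2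
  calc phi F f (θ k) * F (θ k) / Gfun F f vhi (θ k)
      = phi F f (θ k) * F (θ k) ^ 2 / Gfun F f vhi (θ k) / F (θ k) := by field_simp
    _ = k / F (θ k) := by rw [hk_eq k hk]

/-- the rationing probability `π(k) = k/F(ϑ(k))` is strictly increasing
in `k` on `(0,1)`. -/
theorem stmt_12
    (vlo vhi : ℝ) (hvlo : 0 ≤ vlo) (hlt : vlo < vhi)
    (F f : ℝ → ℝ) (hFmono : Monotone F)
    (hFlo : F vlo = 0) (hFhi : F vhi = 1)
    (hFderiv : ∀ v ∈ Set.Icc vlo vhi, HasDerivAt F (f v) v)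
    (hfpos : ∀ v ∈ Set.Icc vlo vhi, 0 < f v)
    (hfdiff : DifferentiableOn ℝ f (Set.Icc vlo vhi))
    (hreg : StrictMonoOn (phi F f) (Set.Icc vlo vhi))
    (vM : ℝ) (hvM : IsLeast {v ∈ Set.Icc vlo vhi | 0 ≤ phi F f v} vM)
    (FInv : ℝ → ℝ)
    (hFInv : ∀ k ∈ Set.Ioo (0:ℝ) 1, FInv k ∈ Set.Icc vlo vhi ∧ F (FInv k) = k)
    (θ : ℝ → ℝ)
    (hθ : ∀ k ∈ Set.Ioo (0:ℝ) 1, θ k ∈ Set.Icc vlo vhi ∧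
      k * Gfun F f vhi (θ k) = phi F f (θ k) * (F (θ k)) ^ 2)
    (hθuniq : ∀ k ∈ Set.Ioo (0:ℝ) 1, ∀ v ∈ Set.Icc vlo vhi,
      k * Gfun F f vhi v = phi F f v * (F v) ^ 2 → v = θ k)
    (hθloc : ∀ k ∈ Set.Ioo (0:ℝ) 1, θ k ∈ Set.Ioo (max vM (FInv k)) vhi)
    :
    StrictMonoOn (fun k => k / F (θ k)) (Set.Ioo (0:ℝ) 1) :=
  stmt_12_general vlo vhi F f hFlo hFderiv hfpos hfdiff hreg vM hvM FInv θ hθ hθloc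
end
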